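/- arXiv:math/0702445 — 8 statements merged into one kernel-verified Lean document; each statement's English description precedes it below -/
import Mathlib

section
/- Let R be a commutative ring with unity and n, k ≥ 2 integers. The set T of elements α ∈ R such that α is congruent modulo k!·R to a finite sum of traces of k-th powers of matrices in Mₙ(R) is an additive subgroup of R. -/
theorem traces_pow_mod_factorial_addSubgroup (R : Type*) [CommRing R] (n k : ℕ)
    (hn : 2 ≤ n) (hk : 2 ≤ k) :
    ∃ T : AddSubgroup R, ∀ α : R, α ∈ T ↔
      ∃ (l : ℕ) (M : Fin l → Matrix (Fin n) (Fin n) R),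
        α - ∑ i, Matrix.trace ((M i) ^ k) ∈ Ideal.span {(k.factorial : R)} := by
  classical
  set I : Ideal R := Ideal.span {(k.factorial : R)} with hI
  set P : R → Prop := fun s => ∃ (l : ℕ) (M : Fin l → Matrix (Fin n) (Fin n) R),
      s = ∑ i, Matrix.trace ((M i) ^ k) with hP
  have hP0 : P 0 := ⟨0, ![], by simp⟩
  have hPadd : ∀ s t, P s → P t → P (s + t) := by
    rintro s t ⟨l1, M1, rfl⟩ ⟨l2, M2, rfl⟩
    refine ⟨l1 + l2, Fin.append M1 M2, ?_⟩
    rw [Fin.sum_univ_add]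
    simp [Fin.append_left, Fin.append_right]
  have hPsmul : ∀ (m : ℕ) (s : R), P s → P (m • s) := by
    intro m s hs
    induction m with
    | zero => simpa using hP0
    | succ m ih => rw [succ_nsmul]; exact hPadd _ _ ih hs
  refine ⟨{
    carrier := {α | ∃ s, P s ∧ α - s ∈ I}
    zero_mem' := ⟨0, hP0, by simp⟩
    add_mem' := by
      rintro a b ⟨s, hs, has⟩ ⟨t, ht, hbt⟩
      refine ⟨s + t, hPadd _ _ hs ht, ?_⟩
      have : a + b - (s + t) = (a - s) + (b - t) := by ring
      rw [this]; exact I.add_mem has hbt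
    neg_mem' := by
      rintro a ⟨s, hs, has⟩
      refine ⟨(k.factorial - 1) • s, hPsmul _ _ hs, ?_⟩
      have hfac : (k.factorial - 1) + 1 = k.factorial :=
        Nat.succ_pred_eq_of_pos k.factorial_pos
      have key : -a - (k.factorial - 1) • s
          = -(a - s) - ((k.factorial - 1) + 1) • s := by
        push_cast [add_smul]
        ring
      rw [key, hfac]
      refine I.sub_mem (I.neg_mem has) ?_
      rw [nsmul_eq_mul]
      exact Ideal.mem_span_singleton.mpr (dvd_mul_right _ _) }, ?_⟩
  intro α
  constructor
  · rintro ⟨s, ⟨l, M, rfl⟩, h⟩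
    exact ⟨l, M, h⟩
  · rintro ⟨l, M, h⟩
    exact ⟨_, ⟨l, M, rfl⟩, h⟩
end

section
/- Let R be a commutative ring with unity, n, k ≥ 2, and suppose every matrix M in Mₙ(R) whose trace lies in k!·R is a sum of k-th powers in Mₙ(R). Then a matrix M ∈ Mₙ(R) is a sum of k-th powers of matrices in Mₙ(R) if and only if trace(M) is congruent modulo k!·R to a finite sum of traces of k-th powers of matrices in Mₙ(R). -/
theorem sum_pow_iff_trace_cond (R : Type*) [CommRing R] (n k : ℕ) (hn : 2 ≤ n) (hk : 2 ≤ k)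
    (hRich : ∀ M : Matrix (Fin n) (Fin n) R,
      Matrix.trace M ∈ Ideal.span {(k.factorial : R)} →
      ∃ (l : ℕ) (N : Fin l → Matrix (Fin n) (Fin n) R), M = ∑ i, (N i) ^ k)
    (M : Matrix (Fin n) (Fin n) R) :
    (∃ (l : ℕ) (N : Fin l → Matrix (Fin n) (Fin n) R), M = ∑ i, (N i) ^ k) ↔
      (∃ (l : ℕ) (N : Fin l → Matrix (Fin n) (Fin n) R),
        Matrix.trace M - ∑ i, Matrix.trace ((N i) ^ k) ∈ Ideal.span {(k.factorial : R)}) := by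
  constructor
  · rintro ⟨l, N, rfl⟩
    refine ⟨l, N, ?_⟩
    simp [Matrix.trace_sum]
  · rintro ⟨l, N, h⟩
    have htr : Matrix.trace (M - ∑ i, (N i) ^ k) ∈ Ideal.span {(k.factorial : R)} := by
      rw [Matrix.trace_sub, Matrix.trace_sum]
      exact h
    obtain ⟨m, P, hP⟩ := hRich _ htr
    refine ⟨l + m, Fin.append N P, ?_⟩
    rw [Fin.sum_univ_add]
    have h1 : ∀ i : Fin l, (Fin.append N P (Fin.castAdd m i)) = N i := fun i => by
      simp [Fin.append_left]
    have h2 : ∀ i : Fin m, (Fin.append N P (Fin.natAdd l i)) = P i := fun i => by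
      simp [Fin.append_right]
    simp only [h1, h2]
    have := hP
    linear_combination (norm := abel) this
end

section
/- Let R be a commutative ring with unity and n, k ≥ 2. If every element of the quotient ring R/k!R is a sum of k-th powers of elements of R/k!R, and every matrix in Mₙ(R) with trace in k!·R is a sum of k-th powers in Mₙ(R), then every matrix in Mₙ(R) is a sum of k-th powers of matrices in Mₙ(R). -/
theorem all_matrices_sum_pow_of_quotient (R : Type*) [CommRing R] (n k : ℕ)
    (hn : 2 ≤ n) (hk : 2 ≤ k)
    (hquot : ∀ x : R ⧸ Ideal.span {(k.factorial : R)},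
      ∃ (l : ℕ) (y : Fin l → R ⧸ Ideal.span {(k.factorial : R)}), x = ∑ i, (y i) ^ k)
    (hRich : ∀ M : Matrix (Fin n) (Fin n) R,
      Matrix.trace M ∈ Ideal.span {(k.factorial : R)} →
      ∃ (l : ℕ) (N : Fin l → Matrix (Fin n) (Fin n) R), M = ∑ i, (N i) ^ k) :
    ∀ M : Matrix (Fin n) (Fin n) R,
      ∃ (l : ℕ) (N : Fin l → Matrix (Fin n) (Fin n) R), M = ∑ i, (N i) ^ k := by
  intro M
  haveI : NeZero n := ⟨by omega⟩
  set I := Ideal.span {(k.factorial : R)}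
  obtain ⟨l, y, hy⟩ := hquot (Ideal.Quotient.mk I (Matrix.trace M))
  choose z hz using fun i => Ideal.Quotient.mk_surjective (y i)
  set d : Fin l → Matrix (Fin n) (Fin n) R :=
    fun i => Matrix.diagonal (Pi.single 0 (z i)) with hd
  have htr : ∀ i, Matrix.trace ((d i) ^ k) = (z i) ^ k := by
    intro i
    rw [hd]
    simp only [Matrix.diagonal_pow, Matrix.trace_diagonal]
    have : (Pi.single (0 : Fin n) (z i) : Fin n → R) ^ k = Pi.single 0 ((z i) ^ k) := by
      ext j
      by_cases hj : j = 0
      · subst hj; simp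
      · simp [Pi.single_eq_of_ne hj, zero_pow (by omega : k ≠ 0)]
    rw [this]
    simp [Finset.sum_pi_single']
  have hmem : Matrix.trace (M - ∑ i, (d i) ^ k) ∈ I := by
    rw [← Ideal.Quotient.eq_zero_iff_mem]
    simp only [Matrix.trace_sub, Matrix.trace_sum, htr, map_sub, map_sum, map_pow, hz]
    rw [← hy]
    ring
  obtain ⟨m, N, hN⟩ := hRich _ hmem
  refine ⟨m + l, Fin.append N d, ?_⟩
  rw [Fin.sum_univ_add]
  simp only [Fin.append_left, Fin.append_right]
  rw [← hN]
  exact (sub_add_cancel _ _).symm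
end

section
/- Let q be a prime and R a commutative ring with unity. For any M ∈ Mₙ(R) with n ≥ 2, trace(M^q) ≡ (trace M)^q modulo q·R. -/
/-!
Over a ring `S` of prime characteristic `p`, `X` commutes with the constant matrix `C N`, so
`(X - C N) ^ p = X ^ p - C (N ^ p)`. Taking determinants, `charpoly (N ^ p)` evaluated at `X ^ p`
is `(charpoly N) ^ p`, which is the Frobenius twist of `charpoly N` evaluated at `X ^ p`. Hence
`charpoly (N ^ p)` is that twist, and its subleading coefficient gives
`trace (N ^ p) = (trace N) ^ p`. The theorem is this identity in `R ⧸ (q)`, which has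
characteristic `q` unless `q` is a unit of `R`.
-/

open Polynomial

namespace Matrix

variable {n S : Type*} [DecidableEq n] [Fintype n] [CommRing S] (p : ℕ) [Fact p.Prime] [CharP S p]

theorem charpoly_pow_char [Nonempty n] (N : Matrix n n S) :
    (N ^ p).charpoly = N.charpoly.map (frobenius S p) := by
  apply expand_injective (Fact.out : p.Prime).pos
  have hcharmatrix :
      (expand S p : S[X] →+* S[X]).mapMatrix (charmatrix (N ^ p)) = charmatrix N ^ p := by
    apply matPolyEquiv.injective
    rw [matPolyEquiv_eq_X_pow_sub_C, map_pow matPolyEquiv, matPolyEquiv_charmatrix,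
      sub_pow_char_of_commute p (commute_X (C N)), ← map_pow]
  calc expand S p (N ^ p).charpoly
      = ((expand S p : S[X] →+* S[X]).mapMatrix (charmatrix (N ^ p))).det := RingHom.map_det _ _
    _ = N.charpoly ^ p := by rw [hcharmatrix, det_pow, charpoly]
    _ = expand S p (N.charpoly.map (frobenius S p)) := by
        rw [← map_expand, map_frobenius_expand]

theorem trace_pow_char (N : Matrix n n S) : trace (N ^ p) = trace N ^ p := by
  cases isEmpty_or_nonempty n
  · simp [trace, (Fact.out : p.Prime).ne_zero]
  · rw [trace_eq_neg_charpoly_coeff, trace_eq_neg_charpoly_coeff, charpoly_pow_char, coeff_map,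
      frobenius_def, neg_pow, neg_one_pow_char S p, neg_one_mul]

end Matrix

theorem trace_pow_prime_congr_general (R : Type*) [CommRing R] (q n : ℕ) (hq : q.Prime)
    (M : Matrix (Fin n) (Fin n) R) :
    Matrix.trace (M ^ q) - (Matrix.trace M) ^ q ∈ Ideal.span {(q : R)} := by
  have : Fact q.Prime := ⟨hq⟩
  by_cases hunit : IsUnit (q : R)
  · simp [Ideal.span_singleton_eq_top.mpr hunit]
  have := CharP.quotient R q hunit
  set π := Ideal.Quotient.mk (Ideal.span {(q : R)})
  have hmap_pow : (M ^ q).map π = M.map π ^ q := map_pow π.mapMatrix M q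
  rw [← Ideal.Quotient.eq_zero_iff_mem, map_sub, map_pow, AddMonoidHom.map_trace,
    AddMonoidHom.map_trace, hmap_pow, Matrix.trace_pow_char, sub_self]

theorem trace_pow_prime_congr (R : Type*) [CommRing R] (q n : ℕ) (hq : q.Prime) (hn : 2 ≤ n)
    (M : Matrix (Fin n) (Fin n) R) :
    Matrix.trace (M ^ q) - (Matrix.trace M) ^ q ∈ Ideal.span {(q : R)} :=
  trace_pow_prime_congr_general R q n hq M
end

section
/- Let R be an order in an algebraic number field K. Then every 2×2 matrix over R is a sum of cubes of matrices over R if and only if 3 is coprime to the discriminant of R. -/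
/-!
For a 2 × 2 matrix `N`, Cayley–Hamilton gives `tr (N ^ 3) = (tr N) ^ 3 - 3 tr N det N`, so the
trace of a sum of cubes is a cube modulo `3`; conversely, a matrix whose trace is `t ^ 3 + 3 s` is
an explicit sum of eight cubes. Hence every matrix over `R` is a sum of cubes iff the Frobenius
`x ↦ x ^ 3` of the finite `𝔽₃`-algebra `R / 3R` is surjective, i.e. iff `R / 3R` is reduced.
A finite reduced algebra over the perfect field `𝔽₃` is a product of separable field extensions,
so reducedness is equivalent to the nondegeneracy of its trace form, whose determinant in the
basis reduced from a `ℤ`-basis of `R` is `disc R` modulo `3`.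
-/

open Module

namespace Matrix

variable {S : Type*} [CommRing S]

theorem trace_pow_three_fin_two (N : Matrix (Fin 2) (Fin 2) S) :
    (N ^ 3).trace = N.trace ^ 3 - 3 * N.trace * N.det := by
  simp only [pow_three, trace_fin_two, det_fin_two, mul_apply, Fin.sum_univ_two]
  ring

/- The first three cubes have trace `t ^ 3 + 3 s`. The last five have trace `0` and
determinant `-1`, so they square to `1` and are their own cubes; they add up to the trace-zero
remainder. -/
theorem exists_eq_sum_pow_three_of_trace_eq {M : Matrix (Fin 2) (Fin 2) S} {t s : S}
    (h : M.trace = t ^ 3 + 3 * s) : ∃ N : Fin 8 → Matrix (Fin 2) (Fin 2) S, M = ∑ i, N i ^ 3 := by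
  set a := M 0 0 - t ^ 3 - 2 * s
  refine ⟨![!![t, 0; 0, 0], !![1, 0; 0, 0], !![-1, -s; 1, 0], !![a, 1 - a * a; 1, -a],
    !![1, M 0 1 - s ^ 2 + s - 1 + a * a; 0, -1], !![-1, 0; 0, 1], !![1, 0; M 1 0 + s - 2, -1],
    !![-1, 0; 0, 1]], ?_⟩
  rw [trace_fin_two] at h
  simp only [Fin.sum_univ_eight, cons_val, pow_three, mul_fin_two]
  ext i j
  fin_cases i <;> fin_cases j <;> simp [a]
  · ring
  · ring
  · ring
  · linear_combination h

end Matrix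

theorem Finset.sum_pow_three_of_three_eq_zero {S ι : Type*} [CommRing S] (h3 : (3 : S) = 0)
    (s : Finset ι) (f : ι → S) : (∑ i ∈ s, f i) ^ 3 = ∑ i ∈ s, f i ^ 3 := by
  induction s using Finset.cons_induction with
  | empty => simp
  | cons a s _ ih =>
    rw [sum_cons, sum_cons, ← ih]
    linear_combination (f a * (∑ i ∈ s, f i) * (f a + ∑ i ∈ s, f i)) * h3

theorem forall_eq_sum_pow_three_iff_surjective_pow_three (S : Type*) [CommRing S] :
    (∀ M : Matrix (Fin 2) (Fin 2) S, ∃ (l : ℕ) (N : Fin l → Matrix (Fin 2) (Fin 2) S),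
      M = ∑ i, N i ^ 3) ↔ Function.Surjective fun x : S ⧸ Ideal.span {(3 : S)} => x ^ 3 := by
  let π := Ideal.Quotient.mk (Ideal.span {(3 : S)})
  have h3 : (3 : S ⧸ Ideal.span {(3 : S)}) = 0 := by
    rw [← map_ofNat π 3]
    exact Ideal.Quotient.eq_zero_iff_mem.2 (Ideal.mem_span_singleton_self 3)
  constructor
  · intro h x
    obtain ⟨a, rfl⟩ := Ideal.Quotient.mk_surjective x
    obtain ⟨l, N, hN⟩ := h !![a, 0; 0, 0]
    have htr : π a = ∑ i, π (N i).trace ^ 3 := by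
      simpa [Matrix.trace_sum, Matrix.trace_pow_three_fin_two, map_ofNat, h3] using
        congrArg (fun M => π M.trace) hN
    exact ⟨∑ i, π (N i).trace, (Finset.sum_pow_three_of_three_eq_zero h3 _ _).trans htr.symm⟩
  · intro h M
    obtain ⟨t', ht' : t' ^ 3 = π M.trace⟩ := h (π M.trace)
    obtain ⟨t, rfl⟩ := Ideal.Quotient.mk_surjective t'
    rw [← map_pow (Ideal.Quotient.mk _)] at ht'
    obtain ⟨s, hs⟩ := Ideal.mem_span_singleton'.1 (Ideal.Quotient.eq.1 ht'.symm)
    exact ⟨8, M.exists_eq_sum_pow_three_of_trace_eq (t := t) (s := s) (by linear_combination -hs)⟩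

section TraceMap

variable {ι A B A' B' : Type*} [Fintype ι] [CommRing A] [CommRing B] [CommRing A'] [CommRing B']
  [Algebra A B] [Algebra A' B'] (σ : A →+* A') (Φ : B →+* B') {b : Basis ι A B}
  {b' : Basis ι A' B'}

theorem Algebra.trace_map_of_basis (hb : ∀ i, Φ (b i) = b' i)
    (hσ : ∀ (c : A) (x : B), Φ (c • x) = σ c • Φ x) (x : B) :
    Algebra.trace A' B' (Φ x) = σ (Algebra.trace A B x) := by
  classical
  have hmat : Algebra.leftMulMatrix b' (Φ x) = (Algebra.leftMulMatrix b x).map σ := by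
    ext i j
    have hΦ : Φ (x * b j) = ∑ k, σ (b.repr (x * b j) k) • b' k := by
      conv_lhs => rw [← b.sum_repr (x * b j)]
      simp only [map_sum, hσ, hb]
    rw [Matrix.map_apply, Algebra.leftMulMatrix_eq_repr_mul, Algebra.leftMulMatrix_eq_repr_mul,
      ← hb, ← map_mul, hΦ, b'.repr_sum_self]
  rw [Algebra.trace_eq_matrix_trace b, Algebra.trace_eq_matrix_trace b', hmat]
  exact (AddMonoidHom.map_trace σ.toAddMonoidHom _).symm

theorem Algebra.discr_map_of_basis [DecidableEq ι] (hb : ∀ i, Φ (b i) = b' i)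
    (hσ : ∀ (c : A) (x : B), Φ (c • x) = σ c • Φ x) :
    Algebra.discr A' b' = σ (Algebra.discr A b) := by
  have : Algebra.traceMatrix A' b' = (Algebra.traceMatrix A b).map σ := by
    ext i j
    simp only [Algebra.traceMatrix_apply, Algebra.traceForm_apply, Matrix.map_apply, ← hb,
      ← map_mul, Algebra.trace_map_of_basis σ Φ hb hσ]
  rw [Algebra.discr_def, Algebra.discr_def, this, RingHom.map_det]
  rfl

end TraceMap

theorem Subalgebra.discr_coe_basis {K ι : Type*} [Field K] [CharZero K] [FiniteDimensional ℚ K]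
    [Fintype ι] [DecidableEq ι] (R : Subalgebra ℤ K) (b : Basis ι ℤ R)
    (hι : Fintype.card ι = finrank ℚ K) :
    Algebra.discr ℚ (fun i => (b i : K)) = Algebra.discr ℤ b := by
  have hli : LinearIndependent ℚ (fun i => (b i : K)) := by
    rw [← LinearIndependent.iff_fractionRing (R := ℤ) (K := ℚ)]
    exact b.linearIndependent.map' R.val.toLinearMap
      (LinearMap.ker_eq_bot.mpr Subtype.val_injective)
  let bK := basisOfLinearIndependentOfCardEqFinrank' _ hli hι
  have := Algebra.discr_map_of_basis (Int.castRingHom ℚ) R.val.toRingHom (b := b) (b' := bK)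
    (fun i => by simp [bK]) (fun c x => by simp [Algebra.smul_def])
  simpa [bK] using this

section TracePi

variable (F : Type*) [CommRing F] {η : Type*} [Fintype η] (A : η → Type*) [∀ i, CommRing (A i)]
  [∀ i, Algebra F (A i)] [∀ i, Module.Free F (A i)] [∀ i, Module.Finite F (A i)]

theorem Algebra.trace_pi_apply (x : ∀ i, A i) :
    Algebra.trace F (∀ i, A i) x = ∑ i, Algebra.trace F (A i) (x i) := by
  classical
  let b i := Module.Free.chooseBasis F (A i)
  have hmat : Algebra.leftMulMatrix (Pi.basis b) x =
      Matrix.blockDiagonal' fun i => Algebra.leftMulMatrix (b i) (x i) := by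
    ext ⟨i, k⟩ ⟨j, l⟩
    rw [Matrix.blockDiagonal'_apply]
    simp only [Algebra.leftMulMatrix_eq_repr_mul, Pi.basis_apply, Pi.basis_repr]
    split_ifs with h
    · subst h
      simp
    · simp [h]
  rw [Algebra.trace_eq_matrix_trace (Pi.basis b), hmat, Matrix.trace_blockDiagonal']
  simp only [Algebra.trace_eq_matrix_trace (b _)]

theorem Algebra.trace_pi_single [DecidableEq η] (i : η) (y : A i) :
    Algebra.trace F (∀ i, A i) (Pi.single i y) = Algebra.trace F (A i) y := by
  rw [Algebra.trace_pi_apply]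
  exact (Fintype.sum_eq_single i fun j hj => by simp [hj]).trans (by simp)

end TracePi

section Reduced

variable (F A : Type*) [Field F] [PerfectField F] [CommRing A] [Algebra F A]
  [FiniteDimensional F A]

attribute [local instance] IsArtinianRing.fieldOfSubtypeIsMaximal in
theorem Algebra.traceForm_separatingLeft_of_isReduced [IsReduced A] :
    (Algebra.traceForm F A).SeparatingLeft := by
  classical
  have : IsArtinianRing A := IsArtinianRing.of_finite F A
  have := Fintype.ofFinite (MaximalSpectrum A)
  let φ := (IsArtinianRing.equivPi A).restrictScalars F
  intro x hx
  apply φ.injective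
  funext m
  rw [map_zero, Pi.zero_apply]
  have : Algebra.IsSeparable F (A ⧸ m.asIdeal) := Algebra.IsAlgebraic.isSeparable_of_perfectField
  refine (traceForm_nondegenerate F (A ⧸ m.asIdeal)).1 _ fun z => ?_
  have hxz := hx (φ.symm (Pi.single m z))
  rwa [Algebra.traceForm_apply, ← Algebra.trace_eq_of_algEquiv φ, map_mul, φ.apply_symm_apply,
    ← Pi.single_mul_right, Algebra.trace_pi_single] at hxz

theorem Algebra.isReduced_iff_traceForm_nondegenerate :
    IsReduced A ↔ (Algebra.traceForm F A).Nondegenerate := by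
  refine ⟨fun _ => .ofSeparatingLeft (traceForm_separatingLeft_of_isReduced F A),
    fun h => ⟨fun x hx => h.1 x fun y => ?_⟩⟩
  exact (isNilpotent_trace_of_isNilpotent ((Commute.all x y).isNilpotent_mul_right hx)).eq_zero

end Reduced

theorem surjective_frobenius_iff_isReduced (A : Type*) [CommRing A] [Finite A] (p : ℕ)
    [Fact p.Prime] [CharP A p] : Function.Surjective (frobenius A p) ↔ IsReduced A := by
  rw [← Finite.injective_iff_surjective, injective_iff_map_eq_zero,
    isReduced_iff_pow_one_lt p (Fact.out : p.Prime).one_lt]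
  rfl

theorem Module.Basis.natCast_mem_nonunits {B ι : Type*} [CommRing B] [Nontrivial B]
    (b : Basis ι ℤ B) {p : ℕ} (hp : p ≠ 1) : (p : B) ∈ nonunits B := by
  intro hunit
  obtain ⟨w, hw⟩ := hunit.exists_right_inv
  obtain ⟨i⟩ := b.index_nonempty
  have hbi : b i = (p : ℤ) • (w * b i) := by
    rw [zsmul_eq_mul, Int.cast_natCast, ← mul_assoc, hw, one_mul]
  have h1 := congrArg (fun x => b.repr x i) hbi
  simp only [Basis.repr_self, Finsupp.single_eq_same, map_zsmul, Finsupp.smul_apply,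
    smul_eq_mul] at h1
  exact hp (by exact_mod_cast Int.eq_one_of_dvd_one (by positivity) ⟨_, h1⟩)

section ModPrime

variable {B ι : Type*} [CommRing B] [Fintype ι] (b : Basis ι ℤ B) (p : ℕ)
  [CharP (B ⧸ Ideal.span {(p : B)}) p]

attribute [local instance] ZMod.algebra

local notation "π" => Ideal.Quotient.mk (Ideal.span {(p : B)})

theorem Ideal.Quotient.mk_zsmul_span_natCast (c : ℤ) (x : B) :
    π (c • x) = (c : ZMod p) • π x := by
  rw [map_zsmul, Int.cast_smul_eq_zsmul]

theorem Module.Basis.linearIndependent_quotient_span_natCast :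
    LinearIndependent (ZMod p) fun i => π (b i) := by
  rw [Fintype.linearIndependent_iff]
  intro g hg i
  choose c hc using fun j => ZMod.intCast_surjective (g j)
  have hmem : ∑ j, c j • b j ∈ Ideal.span {(p : B)} := by
    rw [← Ideal.Quotient.eq_zero_iff_mem, map_sum, ← hg]
    simp only [Ideal.Quotient.mk_zsmul_span_natCast, hc]
  obtain ⟨w, hw⟩ := Ideal.mem_span_singleton'.1 hmem
  have hci : c i = p * b.repr w i := by
    rw [← b.repr_sum_self c, ← hw, mul_comm, ← Int.cast_natCast, ← zsmul_eq_mul, map_zsmul]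
    rfl
  rw [← hc i, hci, Int.cast_mul, Int.cast_natCast, ZMod.natCast_self, zero_mul]

theorem Module.Basis.top_le_span_quotient_span_natCast :
    ⊤ ≤ Submodule.span (ZMod p) (Set.range fun i => π (b i)) := by
  rintro x -
  obtain ⟨x, rfl⟩ := Ideal.Quotient.mk_surjective x
  rw [← b.sum_repr x, map_sum]
  refine Submodule.sum_mem _ fun j _ => ?_
  rw [Ideal.Quotient.mk_zsmul_span_natCast]
  exact Submodule.smul_mem _ _ (Submodule.subset_span (Set.mem_range_self j))

noncomputable def Module.Basis.modPrime : Basis ι (ZMod p) (B ⧸ Ideal.span {(p : B)}) :=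
  .mk (b.linearIndependent_quotient_span_natCast p) (b.top_le_span_quotient_span_natCast p)

theorem Module.Basis.modPrime_apply (i : ι) : b.modPrime p i = π (b i) :=
  Basis.mk_apply _ _ i

theorem Module.Basis.discr_modPrime [DecidableEq ι] :
    Algebra.discr (ZMod p) (b.modPrime p) = Algebra.discr ℤ b :=
  Algebra.discr_map_of_basis (Int.castRingHom _) π (fun i => (b.modPrime_apply p i).symm)
    (Ideal.Quotient.mk_zsmul_span_natCast p)

end ModPrime

theorem Module.Basis.surjective_pow_iff_isCoprime_discr {B ι : Type*} [CommRing B] [Nontrivial B]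
    [Fintype ι] [DecidableEq ι] (b : Basis ι ℤ B) (p : ℕ) [Fact p.Prime] :
    Function.Surjective (fun x : B ⧸ Ideal.span {(p : B)} => x ^ p) ↔
      IsCoprime (p : ℤ) (Algebra.discr ℤ b) := by
  have := CharP.quotient B p (b.natCast_mem_nonunits (Fact.out : p.Prime).ne_one)
  let := ZMod.algebra (B ⧸ Ideal.span {(p : B)}) p
  have := Module.Finite.of_basis (b.modPrime p)
  have : Finite (B ⧸ Ideal.span {(p : B)}) := Module.finite_of_finite (ZMod p)
  rw [(Nat.prime_iff_prime_int.1 Fact.out).coprime_iff_not_dvd,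
    ← ZMod.intCast_zmod_eq_zero_iff_dvd, ← b.discr_modPrime p, ← ne_eq, Algebra.discr_def,
    Algebra.traceMatrix_of_basis, ← LinearMap.BilinForm.nondegenerate_iff_det_ne_zero,
    ← Algebra.isReduced_iff_traceForm_nondegenerate, ← surjective_frobenius_iff_isReduced _ p]
  rfl

theorem sum_of_cubes_iff_coprime_three_general (K : Type*) [Field K] [NumberField K]
    (R : Subalgebra ℤ K)
    (b : Module.Basis (Fin (Module.finrank ℚ K)) ℤ R)
    (D : ℤ) (hD : (D : ℚ) = Algebra.discr ℚ (fun i => ((b i : R) : K))) :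
    (∀ M : Matrix (Fin 2) (Fin 2) R,
      ∃ (l : ℕ) (N : Fin l → Matrix (Fin 2) (Fin 2) R), M = ∑ i, (N i) ^ 3) ↔
    IsCoprime (3 : ℤ) D := by
  have hDb : D = Algebra.discr ℤ b := by
    rw [R.discr_coe_basis b (Fintype.card_fin _)] at hD
    exact_mod_cast hD
  have : Fact (Nat.Prime 3) := ⟨Nat.prime_three⟩
  rw [forall_eq_sum_pow_three_iff_surjective_pow_three, hDb]
  exact_mod_cast b.surjective_pow_iff_isCoprime_discr 3

theorem sum_of_cubes_iff_coprime_three (K : Type*) [Field K] [NumberField K]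
    (R : Subalgebra ℤ K) (hR : ∀ x ∈ R, IsIntegral ℤ x)
    (b : Module.Basis (Fin (Module.finrank ℚ K)) ℤ R)
    (D : ℤ) (hD : (D : ℚ) = Algebra.discr ℚ (fun i => ((b i : R) : K))) :
    (∀ M : Matrix (Fin 2) (Fin 2) R,
      ∃ (l : ℕ) (N : Fin l → Matrix (Fin 2) (Fin 2) R), M = ∑ i, (N i) ^ 3) ↔
    IsCoprime (3 : ℤ) D :=
  sum_of_cubes_iff_coprime_three_general K R b D hD
end

section
/- Let R be a commutative ring with unity, n ≥ 2, j ≥ 1. If a matrix M ∈ Mₙ(R) is a sum of 2j-th powers of matrices over R, then trace(M) is a square modulo 2R. -/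
open Finset

lemma trace_mul_self_key {R : Type*} [CommRing R] {n : ℕ} (A : Matrix (Fin n) (Fin n) R) :
    ∃ z : R, Matrix.trace (A * A) = (Matrix.trace A) ^ 2 + 2 * z := by
  classical
  set f : Fin n × Fin n → R :=
    fun p => A p.1 p.2 * A p.2 p.1 - A p.1 p.1 * A p.2 p.2 with hf
  have hsum : Matrix.trace (A * A) - (Matrix.trace A) ^ 2
      = ∑ p ∈ univ ×ˢ (univ : Finset (Fin n)), f p := by
    rw [Finset.sum_product]
    simp only [hf, Matrix.trace, Matrix.diag, Matrix.mul_apply, sq, Finset.sum_mul_sum,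
      Finset.sum_sub_distrib]
  have hsplit : ∑ p ∈ univ ×ˢ (univ : Finset (Fin n)), f p
      = 2 * ∑ p ∈ (univ ×ˢ (univ : Finset (Fin n))).filter (fun p => p.1 < p.2), f p := by
    rw [← Finset.sum_filter_add_sum_filter_not (univ ×ˢ univ) (fun p => p.1 < p.2) f]
    have hdiag : ∑ p ∈ (univ ×ˢ (univ : Finset (Fin n))).filter
        (fun p => ¬ p.1 < p.2 ∧ ¬ p.2 < p.1), f p = 0 := by
      apply Finset.sum_eq_zero
      intro p hp
      simp only [Finset.mem_filter] at hp
      have : p.1 = p.2 := le_antisymm (not_lt.1 hp.2.2) (not_lt.1 hp.2.1)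
      simp [hf, this, mul_comm]
    have h2 : ∑ p ∈ (univ ×ˢ (univ : Finset (Fin n))).filter (fun p => ¬ p.1 < p.2), f p
        = ∑ p ∈ (univ ×ˢ (univ : Finset (Fin n))).filter (fun p => p.1 < p.2), f p := by
      rw [← Finset.sum_filter_add_sum_filter_not
        ((univ ×ˢ (univ : Finset (Fin n))).filter (fun p => ¬ p.1 < p.2))
        (fun p => p.2 < p.1) f, Finset.filter_filter, Finset.filter_filter, hdiag, add_zero]
      refine Finset.sum_nbij' (fun p => Prod.swap p) (fun p => Prod.swap p) ?_ ?_ ?_ ?_ ?_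
      · intro p hp
        simp only [Finset.mem_filter, Finset.mem_product, Finset.mem_univ, true_and] at hp ⊢
        exact hp.2
      · intro p hp
        simp only [Finset.mem_filter, Finset.mem_product, Finset.mem_univ, true_and] at hp ⊢
        exact ⟨not_lt.2 hp.le, hp⟩
      · intro p _; simp
      · intro p _; simp
      · intro p _; simp only [hf, Prod.swap]; ring
    rw [h2]; ring
  refine ⟨∑ p ∈ (univ ×ˢ (univ : Finset (Fin n))).filter (fun p => p.1 < p.2), f p, ?_⟩
  have := hsum.trans hsplit
  linear_combination this

lemma sum_sq_key {R : Type*} [CommRing R] {l : ℕ} (a : Fin l → R) :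
    ∃ z : R, (∑ i, a i) ^ 2 = ∑ i, (a i) ^ 2 + 2 * z := by
  induction l with
  | zero => exact ⟨0, by simp⟩
  | succ m ih =>
    obtain ⟨z, hz⟩ := ih (fun i => a i.succ)
    refine ⟨z + a 0 * ∑ i : Fin m, a i.succ, ?_⟩
    rw [Fin.sum_univ_succ a, Fin.sum_univ_succ (fun i => (a i)^2), add_sq, hz]
    ring

theorem trace_square_mod_two_of_sum_even_powers (R : Type*) [CommRing R] (n j : ℕ)
    (hn : 2 ≤ n) (hj : 1 ≤ j) (M : Matrix (Fin n) (Fin n) R)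
    (h : ∃ (l : ℕ) (N : Fin l → Matrix (Fin n) (Fin n) R), M = ∑ i, (N i) ^ (2 * j)) :
    ∃ y z : R, Matrix.trace M = y ^ 2 + 2 * z := by
  obtain ⟨l, N, rfl⟩ := h
  -- trace of each (N i)^(2j) = trace ((N i)^j * (N i)^j)
  have key : ∀ i : Fin l, ∃ z : R,
      Matrix.trace ((N i) ^ (2 * j)) = (Matrix.trace ((N i) ^ j)) ^ 2 + 2 * z := by
    intro i
    have : (N i) ^ (2 * j) = (N i) ^ j * (N i) ^ j := by
      rw [← pow_add]; ring_nf
    rw [this]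
    exact trace_mul_self_key _
  choose w hw using key
  obtain ⟨z2, hz2⟩ := sum_sq_key (fun i => Matrix.trace ((N i) ^ j))
  refine ⟨∑ i, Matrix.trace ((N i) ^ j), (∑ i, w i) - z2, ?_⟩
  rw [Matrix.trace_sum]
  simp only [hw]
  rw [Finset.sum_add_distrib, ← Finset.mul_sum, hz2]
  ring
end

section
/- Let α = (1+√5)/2 in the ring of integers 𝒪 = ℤ[α] of ℚ(√5). For any β = a + bα ∈ 𝒪 with a, b ∈ ℤ, the coefficient of α in β³ is even; consequently α is not a sum of cubes of elements of 𝒪. -/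
/-!
Since α² = α + 1, the α-coordinate of (a + cα)³ is 3ac(a + c) + 2c³, and ac(a + c) is always
even. So the α-coordinate, reduced mod 2, vanishes on every cube and hence on every sum of
cubes, while it equals 1 on α.
-/

open Module

theorem Int.even_mul_mul_add (a c : ℤ) : Even (a * c * (a + c)) := by
  rcases Int.even_or_odd a with ha | ha
  · exact (ha.mul_right c).mul_right _
  rcases Int.even_or_odd c with hc | hc
  · exact (hc.mul_left a).mul_right _
  · exact (ha.add_odd hc).mul_left _

section GoldenRatio

variable {R : Type*} [CommRing R] {α : R}

theorem add_mul_cube_of_sq_eq_add_one (hα : α ^ 2 = α + 1) (x y : R) :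
    (x + y * α) ^ 3 =
      (x ^ 3 + 3 * x * y ^ 2 + y ^ 3) + (3 * (x * y * (x + y)) + 2 * y ^ 3) * α := by
  linear_combination (3 * x * y ^ 2 + y ^ 3 * (α + 1)) * hα

theorem exists_intCast_add_mul_cube_eq (hα : α ^ 2 = α + 1) (a c : ℤ) :
    ∃ m n : ℤ, ((a : R) + (c : R) * α) ^ 3 = (m : R) + ((2 * n : ℤ) : R) * α := by
  obtain ⟨k, hk⟩ := Int.even_mul_mul_add a c
  refine ⟨a ^ 3 + 3 * a * c ^ 2 + c ^ 3, 3 * k + c ^ 3, ?_⟩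
  have hk' : (a : R) * c * (a + c) = k + k := by exact_mod_cast congrArg (Int.cast : ℤ → R) hk
  rw [add_mul_cube_of_sq_eq_add_one hα, hk']
  push_cast
  ring

variable (b : Basis (Fin 2) ℤ R) (hb0 : b 0 = 1) (hb1 : b 1 = α)
include hb0 hb1

theorem eq_intCast_add_mul_of_basis (x : R) :
    x = (b.coord 0 x : R) + (b.coord 1 x : R) * α := by
  conv_lhs => rw [← b.sum_repr x]
  simp [Fin.sum_univ_two, hb0, hb1, zsmul_eq_mul]

theorem coord_one_intCast_add_mul (p q : ℤ) : b.coord 1 ((p : R) + (q : R) * α) = q := by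
  have h : (p : R) + (q : R) * α = p • b 0 + q • b 1 := by
    simp [hb0, hb1, zsmul_eq_mul]
  rw [h, map_add, map_zsmul, map_zsmul]
  simp

theorem even_coord_one_cube (hα : α ^ 2 = α + 1) (β : R) : Even (b.coord 1 (β ^ 3)) := by
  obtain ⟨m, n, h⟩ := exists_intCast_add_mul_cube_eq hα (b.coord 0 β) (b.coord 1 β)
  rw [← eq_intCast_add_mul_of_basis b hb0 hb1] at h
  rw [h, coord_one_intCast_add_mul b hb0 hb1]
  exact even_two_mul n

end GoldenRatio

theorem golden_not_sum_of_cubes (R : Type*) [CommRing R] (α : R) (hα : α ^ 2 = α + 1)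
    (b : Module.Basis (Fin 2) ℤ R) (hb0 : b 0 = 1) (hb1 : b 1 = α) :
    (∀ a c : ℤ, ∃ m n : ℤ, ((a : R) + (c : R) * α) ^ 3 = (m : R) + ((2 * n : ℤ) : R) * α) ∧
    ¬ ∃ (l : ℕ) (β : Fin l → R), α = ∑ i, (β i) ^ 3 := by
  refine ⟨exists_intCast_add_mul_cube_eq hα, ?_⟩
  rintro ⟨l, β, hβ⟩
  have h : Even (b.coord 1 α) := by
    rw [hβ, map_sum]
    exact Finset.even_sum _ fun i _ => even_coord_one_cube b hb0 hb1 hα (β i)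
  rw [← hb1, Basis.coord_apply, b.repr_self, Finsupp.single_eq_same] at h
  exact Int.not_even_one h
end

section
/- Every 2×2 matrix over the ring of integers 𝒪 of ℚ(√5) is a sum of cubes of matrices over 𝒪, even though the element (1+√5)/2 is not a sum of cubes of elements of 𝒪. -/
/-!
Over any commutative ring, a 2 × 2 matrix of trace 0 and determinant -1 squares to 1, so it is
its own cube; differences of such matrices give every off-diagonal matrix and every diag(a, -a).
Cubing the companion matrix of X² - tX + d then isolates diag(0, t³ - 3td), so every matrix is a
sum of cubes as soon as the elements t³ - 3td generate the ring additively. In ℤ[α] with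
α² = α + 1 they do: 1 = 1³ and α = (1 - α)³ - 3(1 - α). On the other hand the α-coordinate of
(m + nα)³ is 3m²n + 3mn² + 2n³, which is always even, so α is not a sum of cubes in ℤ[α].
-/

open Matrix

/-- Closed under negation because `(-x) ^ 3 = -x ^ 3`, so its elements are exactly the finite
sums of cubes (`mem_sumCubes_iff`). -/
def sumCubes (A : Type*) [Ring A] : AddSubgroup A :=
  AddSubgroup.closure (Set.range fun x : A => x ^ 3)

section Ring
variable {A : Type*} [Ring A]

theorem pow_three_mem_sumCubes (x : A) : x ^ 3 ∈ sumCubes A :=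
  AddSubgroup.subset_closure ⟨x, rfl⟩

theorem mem_sumCubes_of_mul_self_eq_one {x : A} (hx : x * x = 1) : x ∈ sumCubes A := by
  have hcube : x ^ 3 = x := by rw [pow_succ, pow_two, hx, one_mul]
  simpa only [hcube] using pow_three_mem_sumCubes x

theorem mem_sumCubes_iff {x : A} :
    x ∈ sumCubes A ↔ ∃ (l : ℕ) (N : Fin l → A), x = ∑ i, N i ^ 3 := by
  refine ⟨fun hx => ?_, ?_⟩
  · induction hx using AddSubgroup.closure_induction with
    | mem x hx =>
      obtain ⟨N, rfl⟩ := hx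
      exact ⟨1, fun _ => N, by simp⟩
    | zero => exact ⟨0, ![], by simp⟩
    | add x y _ _ ihx ihy =>
      obtain ⟨l₁, N₁, rfl⟩ := ihx
      obtain ⟨l₂, N₂, rfl⟩ := ihy
      exact ⟨l₁ + l₂, Fin.append N₁ N₂, by simp [Fin.sum_univ_add]⟩
    | neg x _ ih =>
      obtain ⟨l, N, rfl⟩ := ih
      exact ⟨l, fun i => -N i, by simp [Odd.neg_pow (by decide : Odd 3)]⟩
  · rintro ⟨l, N, rfl⟩
    exact sum_mem fun i _ => pow_three_mem_sumCubes (N i)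

end Ring

/-- `t ^ 3 - 3 * t * d` is the trace of `N ^ 3` for any `N` of trace `t` and determinant `d`. -/
def cubeTraces (R : Type*) [CommRing R] : Set R :=
  Set.range fun p : R × R => p.1 ^ 3 - 3 * p.1 * p.2

section Matrix
variable {R : Type*} [CommRing R]

local notation "M₂" => Matrix (Fin 2) (Fin 2) R

theorem mem_sumCubes_of_trace_eq_zero_of_det_eq_neg_one (a b c : R) (h : a * a + b * c = 1) :
    !![a, b; c, -a] ∈ sumCubes M₂ := by
  refine mem_sumCubes_of_mul_self_eq_one ?_
  rw [mul_fin_two, one_fin_two, ← h]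
  ext i j; fin_cases i <;> fin_cases j <;> simp <;> ring

theorem single_zero_one_mem_sumCubes (x : R) : single 0 1 x ∈ sumCubes M₂ := by
  convert sub_mem (mem_sumCubes_of_trace_eq_zero_of_det_eq_neg_one 1 x 0 (by ring))
    (mem_sumCubes_of_trace_eq_zero_of_det_eq_neg_one 1 0 0 (by ring)) using 1
  ext i j; fin_cases i <;> fin_cases j <;> simp

theorem single_one_zero_mem_sumCubes (x : R) : single 1 0 x ∈ sumCubes M₂ := by
  convert sub_mem (mem_sumCubes_of_trace_eq_zero_of_det_eq_neg_one 1 0 x (by ring))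
    (mem_sumCubes_of_trace_eq_zero_of_det_eq_neg_one 1 0 0 (by ring)) using 1
  ext i j; fin_cases i <;> fin_cases j <;> simp

theorem diagonal_neg_mem_sumCubes (a : R) : !![a, 0; 0, -a] ∈ sumCubes M₂ := by
  convert sub_mem (sub_mem (mem_sumCubes_of_trace_eq_zero_of_det_eq_neg_one a (1 - a * a) 1
    (by ring)) (single_zero_one_mem_sumCubes (1 - a * a))) (single_one_zero_mem_sumCubes 1) using 1
  ext i j; fin_cases i <;> fin_cases j <;> simp

theorem companion_pow_three (t d : R) :
    !![t, -d; 1, 0] ^ 3 = !![t ^ 3 - 2 * t * d, d * (d - t ^ 2); t ^ 2 - d, -(t * d)] := by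
  rw [pow_succ, pow_two, mul_fin_two, mul_fin_two]
  ext i j; fin_cases i <;> fin_cases j <;> simp <;> ring

theorem single_one_one_mem_sumCubes_of_mem_cubeTraces {x : R} (hx : x ∈ cubeTraces R) :
    single 1 1 x ∈ sumCubes M₂ := by
  obtain ⟨⟨t, d⟩, rfl⟩ := hx
  have h := sub_mem (sub_mem (sub_mem (pow_three_mem_sumCubes !![t, -d; 1, 0])
    (single_zero_one_mem_sumCubes (d * (d - t ^ 2)))) (single_one_zero_mem_sumCubes (t ^ 2 - d)))
    (diagonal_neg_mem_sumCubes (t ^ 3 - 2 * t * d))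
  rw [companion_pow_three] at h
  convert h using 1
  ext i j; fin_cases i <;> fin_cases j <;> simp; ring

theorem sumCubes_matrix_fin_two_eq_top (h : AddSubgroup.closure (cubeTraces R) = ⊤) :
    sumCubes M₂ = ⊤ := by
  have single_one_one_mem (x : R) : single 1 1 x ∈ sumCubes M₂ := by
    have hle : AddSubgroup.closure (cubeTraces R) ≤
        (sumCubes M₂).comap (singleAddMonoidHom 1 1) :=
      (AddSubgroup.closure_le _).mpr fun _ => single_one_one_mem_sumCubes_of_mem_cubeTraces
    exact hle (h ▸ AddSubgroup.mem_top x)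
  have single_mem (i j : Fin 2) (x : R) : single i j x ∈ sumCubes M₂ := by
    fin_cases i <;> fin_cases j
    · convert add_mem (diagonal_neg_mem_sumCubes x) (single_one_one_mem x) using 1
      ext i j; fin_cases i <;> fin_cases j <;> simp
    · exact single_zero_one_mem_sumCubes x
    · exact single_one_zero_mem_sumCubes x
    · exact single_one_one_mem x
  exact eq_top_iff.mpr fun M _ => M.induction_on' (zero_mem _) (fun _ _ => add_mem) single_mem

end Matrix

namespace Module.Basis
variable {R : Type*} [CommRing R] (b : Basis (Fin 2) ℤ R)

theorem eq_repr_zero_add_repr_one_mul (hb0 : b 0 = 1) (x : R) :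
    x = b.repr x 0 + b.repr x 1 * b 1 := by
  conv_lhs => rw [← b.sum_repr x]
  simp [Fin.sum_univ_two, hb0, zsmul_eq_mul]

theorem repr_intCast_add_intCast_mul_one (hb0 : b 0 = 1) (m n : ℤ) :
    b.repr (m + n * b 1) 1 = n := by
  have h : (m : R) + n * b 1 = m • b 0 + n • b 1 := by simp [hb0, zsmul_eq_mul]
  rw [h, map_add, map_zsmul, map_zsmul, b.repr_self, b.repr_self]
  simp

theorem two_dvd_repr_pow_three_one (hb0 : b 0 = 1) (hα : b 1 ^ 2 = b 1 + 1) (x : R) :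
    2 ∣ b.repr (x ^ 3) 1 := by
  obtain ⟨m, n, rfl⟩ : ∃ m n : ℤ, x = m + n * b 1 :=
    ⟨_, _, b.eq_repr_zero_add_repr_one_mul hb0 x⟩
  have hcube : ((m : R) + n * b 1) ^ 3 = ((m ^ 3 + 3 * m * n ^ 2 + n ^ 3 : ℤ) : R) +
      ((3 * m ^ 2 * n + 3 * m * n ^ 2 + 2 * n ^ 3 : ℤ) : R) * b 1 := by
    push_cast
    linear_combination (3 * m * n ^ 2 + n ^ 3 * (b 1 + 1)) * hα
  rw [hcube, b.repr_intCast_add_intCast_mul_one hb0, ← even_iff_two_dvd]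
  simp [parity_simps]

theorem apply_one_notMem_sumCubes (hb0 : b 0 = 1) (hα : b 1 ^ 2 = b 1 + 1) :
    b 1 ∉ sumCubes R := by
  have hle : sumCubes R ≤ (AddSubgroup.zmultiples (2 : ℤ)).comap (b.coord 1).toAddMonoidHom :=
    (AddSubgroup.closure_le _).mpr (Set.range_subset_iff.mpr fun x =>
      Int.mem_zmultiples_iff.mpr (b.two_dvd_repr_pow_three_one hb0 hα x))
  intro h
  simpa using Int.mem_zmultiples_iff.mp (hle h)

theorem closure_cubeTraces_eq_top (hb0 : b 0 = 1) (hα : b 1 ^ 2 = b 1 + 1) :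
    AddSubgroup.closure (cubeTraces R) = ⊤ := by
  have hb : AddSubgroup.closure (Set.range b) = ⊤ := by
    rw [← Submodule.span_int_eq_addSubgroupClosure, b.span_eq, Submodule.top_toAddSubgroup]
  rw [eq_top_iff, ← hb, AddSubgroup.closure_le, Set.range_subset_iff]
  intro i
  apply AddSubgroup.subset_closure
  fin_cases i
  · exact ⟨(1, 0), by simp [hb0]⟩
  · exact ⟨(1 - b 1, 1), by simp; linear_combination (2 - b 1) * hα⟩

end Module.Basis

theorem matrices_sum_cubes_but_golden_not (R : Type*) [CommRing R] (α : R)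
    (hα : α ^ 2 = α + 1)
    (b : Module.Basis (Fin 2) ℤ R) (hb0 : b 0 = 1) (hb1 : b 1 = α) :
    (∀ M : Matrix (Fin 2) (Fin 2) R,
      ∃ (l : ℕ) (N : Fin l → Matrix (Fin 2) (Fin 2) R), M = ∑ i, (N i) ^ 3) ∧
    ¬ ∃ (l : ℕ) (β : Fin l → R), α = ∑ i, (β i) ^ 3 := by
  subst hb1
  have htop := sumCubes_matrix_fin_two_eq_top (b.closure_cubeTraces_eq_top hb0 hα)
  refine ⟨fun M => mem_sumCubes_iff.mp (htop ▸ AddSubgroup.mem_top M), fun h => ?_⟩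
  exact b.apply_one_notMem_sumCubes hb0 hα (mem_sumCubes_iff.mpr h)
end
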